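/- arXiv:2306.08970 — 5 statements merged into one kernel-verified Lean document; each statement's English description precedes it below -/
import Mathlib

section
/- Let a : Fin n → ℕ be a super-increasing sequence with respect to bound B, i.e., a 0 = 1 and for every i, (∑_{j<i} a j · B) < a i. Then for any gradient vector ∇ : Fin n → ℕ with ∇ j ≤ B for all j, the greedy recovery algorithm that iteratively computes t_{i-1} = t_i mod a_i and ∇_i = (t_i - t_{i-1})/a_i starting from t_n = ∑_j a j · ∇ j correctly recovers each ∇ j. -/
/-- The sequence `t` of Algorithm 2: `t n = total` and `t k = t (k+1) % A k`,
realized as a fold of the successive `mod` operations. -/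
def tseq (A : ℕ → ℕ) (total n k : ℕ) : ℕ :=
  (List.range' k (n - k)).foldr (fun j x => x % A j) total

theorem tseq_step (A : ℕ → ℕ) (total n k : ℕ) (h : k < n) :
    tseq A total n k = tseq A total n (k + 1) % A k := by
  unfold tseq
  rw [show n - k = (n - (k + 1)) + 1 by omega, List.range'_succ]
  simp

theorem tseq_last (A : ℕ → ℕ) (total n : ℕ) : tseq A total n n = total := by
  unfold tseq
  simp

theorem sum_range_ite (f : ℕ → ℕ) (k n : ℕ) (h : k ≤ n) :
    ∑ j ∈ Finset.range n, (if j < k then f j else 0) = ∑ j ∈ Finset.range k, f j := by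
  rw [← Finset.sum_filter]
  congr 1
  ext x
  simp only [Finset.mem_filter, Finset.mem_range]
  omega

theorem recovery_correct (n : ℕ) (hn : 0 < n) (B : ℕ) (a : Fin n → ℕ)
    (ha0 : a ⟨0, hn⟩ = 1)
    (hsup : ∀ i : Fin n, (∑ j ∈ Finset.univ.filter (fun j : Fin n => j < i), a j * B) < a i)
    (grad : Fin n → ℕ) (hb : ∀ j, grad j ≤ B) :
    ∀ i : Fin n,
      (tseq (fun k => if h : k < n then a ⟨k, h⟩ else 1) (∑ j, a j * grad j) n (i + 1)
        - tseq (fun k => if h : k < n then a ⟨k, h⟩ else 1) (∑ j, a j * grad j) n i) / a i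
      = grad i := by
  set A : ℕ → ℕ := fun k => if h : k < n then a ⟨k, h⟩ else 1 with hA
  set g : ℕ → ℕ := fun k => if h : k < n then grad ⟨k, h⟩ else 0 with hg
  set S : ℕ → ℕ := fun k => ∑ j ∈ Finset.range k, A j * g j with hS
  -- bound: S k < A k for k < n
  have hSlt : ∀ k, ∀ h : k < n, S k < A k := by
    intro k h
    have h1 : S k ≤ ∑ j ∈ Finset.range k, A j * B := by
      apply Finset.sum_le_sum
      intro j _
      apply Nat.mul_le_mul_left
      simp only [hg]
      split
      · exact hb _
      · exact Nat.zero_le _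
    have h2 : (∑ j ∈ Finset.univ.filter (fun j : Fin n => j < (⟨k, h⟩ : Fin n)), a j * B)
        = ∑ j ∈ Finset.range k, A j * B := by
      rw [Finset.sum_filter]
      have := Fin.sum_univ_eq_sum_range (fun j => if j < k then A j * B else 0) n
      rw [← sum_range_ite (fun j => A j * B) k n h.le, ← this]
      apply Finset.sum_congr rfl
      intro j _
      simp only [hA, Fin.is_lt, dif_pos, Fin.eta, Fin.lt_def]
    have h3 := hsup ⟨k, h⟩
    rw [h2] at h3
    simp only [hA, dif_pos h]
    calc S k ≤ _ := h1
      _ < a ⟨k, h⟩ := h3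
  -- the total equals S n
  have htot : (∑ j, a j * grad j) = S n := by
    simp only [hS]
    rw [← Fin.sum_univ_eq_sum_range (fun j => A j * g j) n]
    apply Finset.sum_congr rfl
    intro j _
    simp only [hA, hg, Fin.is_lt, dif_pos, Fin.eta]
  -- key invariant
  have key : ∀ m k, k + m = n → tseq A (∑ j, a j * grad j) n k = S k := by
    intro m
    induction m with
    | zero =>
      intro k hk
      have : k = n := by omega
      subst this
      rw [tseq_last, htot]
    | succ m ih =>
      intro k hk
      have hkn : k < n := by omega
      rw [tseq_step A _ n k hkn, ih (k + 1) (by omega)]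
      have hstep : S (k + 1) = S k + A k * g k := Finset.sum_range_succ _ _
      rw [hstep, Nat.add_mul_mod_self_left, Nat.mod_eq_of_lt (hSlt k hkn)]
  intro i
  rw [key (n - i) i (by omega), key (n - (i + 1)) (i + 1) (by omega)]
  have hstep : S (i + 1) = S i + A i * g i := Finset.sum_range_succ _ _
  rw [hstep, Nat.add_sub_cancel_left]
  have hi : (i : ℕ) < n := i.isLt
  simp only [hA, hg, dif_pos hi, Fin.eta]
  have hapos : 0 < a i := lt_of_le_of_lt (Nat.zero_le _) (hsup i)
  exact Nat.mul_div_cancel_left _ hapos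
end

section
/- With notation as in the scheme: E_Agg = ∏_{i∈S} (p+1)^{m_i} · (g^α)^{r_{i1}} in (ZMod p²)ˣ, d/T = g^{∑_{i∈S} r_{i1}}, then E_Agg · (d/T)^{-α} = (p+1)^{∑_{i∈S} m_i} in (ZMod p²)ˣ. -/
theorem server_decryption_units {ι : Type*} (p : ℕ) (hp : p.Prime)
    (g u : (ZMod (p ^ 2))ˣ) (hu : (u : ZMod (p ^ 2)) = (p : ZMod (p ^ 2)) + 1)
    (S : Finset ι) (α : ℕ) (m r1 : ι → ℕ) :
    (∏ i ∈ S, (u ^ m i * (g ^ α) ^ r1 i)) * ((g ^ (∑ i ∈ S, r1 i)) ^ α)⁻¹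
      = u ^ (∑ i ∈ S, m i) := by
  rw [Finset.prod_mul_distrib, ← Finset.prod_pow_eq_pow_sum, ← Finset.prod_pow_eq_pow_sum]
  simp [← pow_mul, ← Finset.prod_pow, Nat.mul_comm α]
end

section
/- Full decryption correctness: if additionally ∑_{i∈S} m_i < p, then L of the canonical representative of E_Agg · (d/T)^{-α} in ZMod p² equals ∑_{i∈S} m_i, where L(x) = (x-1)/p. -/
lemma pow_one_add_p (p M : ℕ) :
    (((p : ZMod (p ^ 2)) + 1)) ^ M = 1 + (M : ZMod (p ^ 2)) * p := by
  induction M with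
  | zero => simp
  | succ n ih =>
    have hp2 : ((p : ZMod (p ^ 2)) * p) = 0 := by
      have : ((p^2 : ℕ) : ZMod (p ^ 2)) = 0 := by simp
      push_cast at this
      linear_combination this
    conv_lhs => rw [pow_succ, ih]
    push_cast
    ring_nf
    linear_combination (n : ZMod (p^2)) * hp2

theorem full_decryption_correct {ι : Type*} (p : ℕ) (hp : p.Prime)
    (g u : (ZMod (p ^ 2))ˣ) (hu : (u : ZMod (p ^ 2)) = (p : ZMod (p ^ 2)) + 1)
    (S : Finset ι) (α : ℕ) (m r1 : ι → ℕ)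
    (hm : (∑ i ∈ S, m i) < p) :
    ((((∏ i ∈ S, (u ^ m i * (g ^ α) ^ r1 i)) * ((g ^ (∑ i ∈ S, r1 i)) ^ α)⁻¹ :
        (ZMod (p ^ 2))ˣ) : ZMod (p ^ 2)).val - 1) / p = ∑ i ∈ S, m i := by
  set M := ∑ i ∈ S, m i with hM
  have hprod : (∏ i ∈ S, (u ^ m i * (g ^ α) ^ r1 i)) * ((g ^ (∑ i ∈ S, r1 i)) ^ α)⁻¹
      = u ^ M := by
    rw [Finset.prod_mul_distrib, Finset.prod_pow_eq_pow_sum]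
    have : ∏ i ∈ S, (g ^ α) ^ r1 i = (g ^ (∑ i ∈ S, r1 i)) ^ α := by
      rw [Finset.prod_pow_eq_pow_sum]
      rw [← pow_mul, ← pow_mul, Nat.mul_comm]
    rw [this, mul_assoc, mul_inv_cancel, mul_one, hM]
  rw [hprod]
  have hval : ((u ^ M : (ZMod (p ^ 2))ˣ) : ZMod (p ^ 2)) = 1 + (M : ZMod (p ^ 2)) * p := by
    push_cast [hu]
    rw [pow_one_add_p]
  have hp1 := hp.one_lt
  have hlt : 1 + M * p < p ^ 2 := by
    nlinarith [Nat.succ_le_of_lt hm]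
  have hnat : ((1 + M * p : ℕ) : ZMod (p ^ 2)) = 1 + (M : ZMod (p ^ 2)) * p := by push_cast; ring
  have hvv : ((u ^ M : (ZMod (p ^ 2))ˣ) : ZMod (p ^ 2)).val = 1 + M * p := by
    rw [hval, ← hnat, ZMod.val_natCast_of_lt hlt]
  rw [hvv]
  have h1 : 1 + M * p - 1 = M * p := by omega
  rw [h1, Nat.mul_div_cancel _ (by omega : 0 < p)]
end

section
/- Single-client leakage: if S = {1} (only one online client), then the decryption L(E_Agg · (d/T)^{-α}) over ZMod p² equals that client's individual compressed gradient m₁ (assuming m₁ < p). -/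
theorem single_client_leakage (p : ℕ) (hp : p.Prime)
    (g u : (ZMod (p ^ 2))ˣ) (hu : (u : ZMod (p ^ 2)) = (p : ZMod (p ^ 2)) + 1)
    (α m₁ sk₁ r11 r12 : ℕ) (hm : m₁ < p) :
    ((((u ^ m₁ * (g ^ α) ^ r11) *
        (((g ^ r11 * (g ^ sk₁) ^ r12) / ((g ^ r12) ^ sk₁)) ^ α)⁻¹ :
        (ZMod (p ^ 2))ˣ) : ZMod (p ^ 2)).val - 1) / p = m₁ := by
  have hunit : (u ^ m₁ * (g ^ α) ^ r11) *
      (((g ^ r11 * (g ^ sk₁) ^ r12) / ((g ^ r12) ^ sk₁)) ^ α)⁻¹ = u ^ m₁ := by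
    have : (g ^ sk₁) ^ r12 = (g ^ r12) ^ sk₁ := by
      rw [← pow_mul, ← pow_mul, Nat.mul_comm]
    rw [this, mul_div_cancel_right, ← pow_mul, ← pow_mul, Nat.mul_comm,
      mul_inv_cancel_right]
  rw [hunit]
  have hp1 := hp.one_lt
  have hp2 : 1 < p ^ 2 := by nlinarith
  haveI : NeZero (p ^ 2) := ⟨by omega⟩
  have hsq : ((p : ZMod (p ^ 2)))^2 = 0 := by
    rw [← Nat.cast_pow, ZMod.natCast_self]
  have hpow : ∀ n : ℕ, ((u : ZMod (p ^ 2)) ^ n) = ((1 + n * p : ℕ) : ZMod (p ^ 2)) := by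
    intro n
    induction n with
    | zero => simp
    | succ k ih =>
        have hstep : ((u : ZMod (p ^ 2)) ^ (k + 1)) = (u : ZMod (p ^ 2)) ^ k * u :=
          pow_succ _ _
        rw [hstep, ih, hu]
        push_cast
        linear_combination (k : ZMod (p ^ 2)) * hsq
  have hlt : 1 + m₁ * p < p ^ 2 := by
    have := hp.one_lt
    nlinarith
  have hval : (((u : ZMod (p ^ 2)) ^ m₁)).val = 1 + m₁ * p := by
    rw [hpow m₁, ZMod.val_natCast_of_lt hlt]
  rw [Units.val_pow_eq_pow_val, hval]
  simp [Nat.mul_div_cancel _ hp.pos]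
end

section
/- End-to-end correctness: let a : Fin n → ℕ be super-increasing with bound N·∇_max and ∑_j a j · N·∇_max < p. For clients i ∈ S with |S| ≤ N and gradients ∇_i componentwise ≤ ∇_max, encrypting each compressed m_i = ∑_j a j (∇_i)_j, aggregating, decrypting with L, and running the recovery algorithm yields exactly the vector (∑_{i∈S}(∇_i)_1, ..., ∑_{i∈S}(∇_i)_n). -/
theorem unit_alg {G : Type*} [CommGroup G] {ι : Type*} (S : Finset ι) (g u : G)
    (m r1 r2 sk : ι → ℕ) (α : ℕ) :
    (∏ i ∈ S, (u ^ m i * (g ^ α) ^ r1 i)) *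
      ((((∏ i ∈ S, (g ^ r1 i * (g ^ (∑ k ∈ S, sk k)) ^ r2 i)) /
          (∏ i ∈ S, (∏ k ∈ S, g ^ r2 k) ^ sk i)) ^ α)⁻¹) = u ^ (∑ i ∈ S, m i) := by
  simp only [Finset.prod_mul_distrib, ← pow_mul, Finset.prod_pow_eq_pow_sum, ← pow_mul,
    ← Finset.sum_mul, ← Finset.mul_sum, div_eq_mul_inv, mul_pow, ← inv_pow]
  rw [show ((∑ k ∈ S, sk k) * ∑ i ∈ S, r2 i) * α = ((∑ i ∈ S, r2 i) * ∑ i ∈ S, sk i) * α by ring,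
    show α * ∑ i ∈ S, r1 i = (∑ i ∈ S, r1 i) * α by ring]
  simp [inv_pow, mul_inv, mul_assoc]

theorem pow_one_add (p : ℕ) (M : ℕ) :
    ((p : ZMod (p^2)) + 1) ^ M = 1 + (M : ZMod (p^2)) * p := by
  have hp2 : (p : ZMod (p^2)) ^ 2 = 0 := by
    have : ((p^2 : ℕ) : ZMod (p^2)) = 0 := ZMod.natCast_self _
    push_cast at this
    exact this
  induction M with
  | zero => simp
  | succ k ih =>
    have h1 : ((p : ZMod (p^2)) + 1) ^ (k+1) = ((p : ZMod (p^2)) + 1) ^ k * ((p : ZMod (p^2)) + 1) :=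
      pow_succ _ _
    rw [h1, ih]
    push_cast
    ring_nf
    rw [hp2]
    ring

theorem val_decode (p M : ℕ) (hp : 0 < p) (hM : 1 + M * p < p ^ 2) :
    (((1 : ZMod (p^2)) + (M : ZMod (p^2)) * p).val - 1) / p = M := by
  have : ((1:ZMod (p^2)) + (M : ZMod (p^2)) * p) = ((1 + M * p : ℕ) : ZMod (p^2)) := by
    push_cast; ring
  rw [this, ZMod.val_cast_of_lt hM]
  simp [Nat.add_sub_cancel_left, Nat.mul_div_cancel _ hp]

theorem tseq_eq (A s : ℕ → ℕ) (n : ℕ)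
    (hlt : ∀ k < n, (∑ l ∈ Finset.range k, A l * s l) < A k) :
    ∀ d k, k + d = n →
      tseq A (∑ l ∈ Finset.range n, A l * s l) n k = ∑ l ∈ Finset.range k, A l * s l := by
  intro d
  induction d with
  | zero => intro k hk; subst hk; simp [tseq]
  | succ d ih =>
    intro k hk
    have hkn : k < n := by omega
    have hrec : tseq A (∑ l ∈ Finset.range n, A l * s l) n k =
        tseq A (∑ l ∈ Finset.range n, A l * s l) n (k+1) % A k := by
      unfold tseq
      have h1 : n - k = (n - (k+1)) + 1 := by omega
      rw [h1, List.range'_succ]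
      simp
    rw [hrec, ih (k+1) (by omega), Finset.sum_range_succ, Nat.add_mul_mod_self_left,
      Nat.mod_eq_of_lt (hlt k hkn)]

theorem filter_sum (n : ℕ) (i : Fin n) (F : ℕ → ℕ) :
    ∑ j ∈ Finset.univ.filter (fun j : Fin n => j < i), F j.val
      = ∑ l ∈ Finset.range i.val, F l := by
  rw [Finset.sum_filter]
  simp_rw [Fin.lt_def]
  rw [Fin.sum_univ_eq_sum_range (fun l => if (l : ℕ) < i.val then F l else 0) n]
  rw [← Finset.sum_subset (Finset.range_subset_range.2 i.isLt.le)
    (fun x _ hx => by simp_all [Finset.mem_range])]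
  exact Finset.sum_congr rfl (fun x hx => by simp_all [Finset.mem_range])

theorem end_to_end_correct {ι : Type*} (p N gmax n : ℕ) (hp : p.Prime) (hn : 0 < n)
    (a : Fin n → ℕ) (ha0 : a ⟨0, hn⟩ = 1)
    (hsup : ∀ i : Fin n,
      (∑ j ∈ Finset.univ.filter (fun j : Fin n => j < i), a j * (N * gmax)) < a i)
    (hfit : (∑ j, a j * (N * gmax)) < p)
    (g u : (ZMod (p ^ 2))ˣ) (hu : (u : ZMod (p ^ 2)) = (p : ZMod (p ^ 2)) + 1)
    (S : Finset ι) (hS : S.card ≤ N)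
    (grad : ι → Fin n → ℕ) (hb : ∀ i ∈ S, ∀ j, grad i j ≤ gmax)
    (α : ℕ) (sk r1 r2 : ι → ℕ) :
    ∀ j : Fin n,
      let A : ℕ → ℕ := fun k => if h : k < n then a ⟨k, h⟩ else 1
      let V : ℕ :=
        ((((∏ i ∈ S, (u ^ (∑ l, a l * grad i l) * (g ^ α) ^ r1 i)) *
            ((((∏ i ∈ S, (g ^ r1 i * (g ^ (∑ k ∈ S, sk k)) ^ r2 i)) /
                (∏ i ∈ S, (∏ k ∈ S, g ^ r2 k) ^ sk i)) ^ α)⁻¹) :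
            (ZMod (p ^ 2))ˣ) : ZMod (p ^ 2)).val - 1) / p
      (tseq A V n (j + 1) - tseq A V n j) / a j = ∑ i ∈ S, grad i j := by
  intro j A V
  -- the sum per-coordinate and the total message
  set s : ℕ → ℕ := fun k => if h : k < n then ∑ i ∈ S, grad i ⟨k, h⟩ else 0 with hs
  set M : ℕ := ∑ i ∈ S, ∑ l, a l * grad i l with hM
  have hppos : 0 < p := hp.pos
  have hp2 : 2 ≤ p := hp.two_le
  -- per-coordinate bound
  have hsbound : ∀ k, s k ≤ N * gmax := by
    intro k
    simp only [hs]
    split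
    · rename_i h
      calc ∑ i ∈ S, grad i ⟨k, h⟩ ≤ ∑ i ∈ S, gmax :=
            Finset.sum_le_sum (fun i hi => hb i hi ⟨k, h⟩)
        _ = S.card * gmax := by rw [Finset.sum_const, smul_eq_mul]
        _ ≤ N * gmax := Nat.mul_le_mul_right _ hS
    · exact Nat.zero_le _
  -- M as a range sum
  have hMsum : M = ∑ l ∈ Finset.range n, A l * s l := by
    rw [hM, Finset.sum_comm, ← Fin.sum_univ_eq_sum_range (fun l => A l * s l) n]
    apply Finset.sum_congr rfl
    intro l _
    simp [A, s, l.isLt, Fin.eta, Finset.mul_sum]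
  -- M < p
  have hMlt : M < p := by
    calc M = ∑ l ∈ Finset.range n, A l * s l := hMsum
      _ ≤ ∑ l ∈ Finset.range n, A l * (N * gmax) :=
          Finset.sum_le_sum (fun l _ => Nat.mul_le_mul_left _ (hsbound l))
      _ = ∑ j : Fin n, a j * (N * gmax) := by
          rw [← Fin.sum_univ_eq_sum_range (fun l => (if h : l < n then a ⟨l, h⟩ else 1) * (N * gmax)) n]
          exact Finset.sum_congr rfl (fun l _ => by simp [A, Fin.is_lt, Fin.eta])
      _ < p := hfit
  -- compute V = M
  have hV : V = M := by
    show ((((∏ i ∈ S, (u ^ (∑ l, a l * grad i l) * (g ^ α) ^ r1 i)) *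
            ((((∏ i ∈ S, (g ^ r1 i * (g ^ (∑ k ∈ S, sk k)) ^ r2 i)) /
                (∏ i ∈ S, (∏ k ∈ S, g ^ r2 k) ^ sk i)) ^ α)⁻¹) :
            (ZMod (p ^ 2))ˣ) : ZMod (p ^ 2)).val - 1) / p = M
    rw [unit_alg S g u (fun i => ∑ l, a l * grad i l) r1 r2 sk α]
    rw [← hM]
    have : (((u ^ M : (ZMod (p^2))ˣ) : ZMod (p^2))) = (1 : ZMod (p^2)) + (M : ZMod (p^2)) * p := by
      rw [Units.val_pow_eq_pow_val, hu, pow_one_add]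
    rw [this]
    apply val_decode p M hppos
    nlinarith [hMlt, hp2]
  -- the superincreasing hypothesis in range form
  have hlt : ∀ k < n, (∑ l ∈ Finset.range k, A l * s l) < A k := by
    intro k hk
    have h1 : (∑ l ∈ Finset.range k, A l * s l) ≤ ∑ l ∈ Finset.range k, A l * (N * gmax) :=
      Finset.sum_le_sum (fun l _ => Nat.mul_le_mul_left _ (hsbound l))
    have h2 : ∑ j ∈ Finset.univ.filter (fun j : Fin n => j < (⟨k, hk⟩ : Fin n)), a j * (N * gmax)
        = ∑ l ∈ Finset.range k, A l * (N * gmax) := by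
      rw [← filter_sum n ⟨k, hk⟩ (fun l => A l * (N * gmax))]
      apply Finset.sum_congr rfl
      intro l _
      simp [A, l.isLt, Fin.eta]
    have h3 := hsup ⟨k, hk⟩
    have h4 : A k = a ⟨k, hk⟩ := by simp [A, hk]
    omega
  -- apply tseq_eq
  have hts : ∀ k ≤ n, tseq A M n k = ∑ l ∈ Finset.range k, A l * s l := by
    intro k hk
    rw [hMsum]
    exact tseq_eq A s n hlt (n - k) k (by omega)
  rw [hV, hts (j + 1) j.isLt, hts j (le_of_lt j.isLt), Finset.sum_range_succ,
    Nat.add_sub_cancel_left]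
  have hA : A j.val = a j := by simp [A, j.isLt]
  have hsj : s j.val = ∑ i ∈ S, grad i j := by simp [s, j.isLt]
  have hapos : 0 < a j := by
    have := hsup j
    omega
  rw [hA, hsj, Nat.mul_div_cancel_left _ hapos]
end
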